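/- (Completeness of the base-extension semantics for IMLL) For every finite multiset Γ of IMLL formulas and every IMLL formula φ: if Γ ⊩ φ, i.e. Γ ⊩_B^∅ φ for every base B, then Γ ⊢ φ in the natural deduction system NIMLL. -/
import Mathlib


/-- Formulas of intuitionistic multiplicative linear logic over a
countably infinite set of atoms (here: `ℕ`). -/
inductive MForm : Type where
  | atom : ℕ → MForm
  | tensor : MForm → MForm → MForm
  | unit : MForm
  | limp : MForm → MForm → MForm
deriving DecidableEq

/-- An atomic rule `(P₁ ▷ p₁, …, Pₙ ▷ pₙ) ⇒ p`: a (possibly empty) finite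
set of atomic sequents together with a conclusion atom. -/
structure MRule : Type where
  prems : Finset (Multiset ℕ × ℕ)
  concl : ℕ

/-- A base is a set of atomic rules. -/
abbrev MBase := Set MRule

/-- Derivability in a base `B`: `P ⊢_B p`. -/
inductive MDer (B : MBase) : Multiset ℕ → ℕ → Prop where
  | ref (p : ℕ) : MDer B {p} p
  | app {r : MRule} (hr : r ∈ B) (S : Multiset ℕ × ℕ → Multiset ℕ)
      (h : ∀ pr ∈ r.prems, MDer B (S pr + pr.1) pr.2) :
      MDer B (r.prems.sum S) r.concl

/-- The resource-indexed support relation `⊩_B^P φ`. -/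
def MSupp : MForm → MBase → Multiset ℕ → Prop
  | .atom p, B, P => MDer B P p
  | .tensor φ ψ, B, P => ∀ X : MBase, B ⊆ X → ∀ U : Multiset ℕ, ∀ p : ℕ,
      (∀ Y : MBase, X ⊆ Y → ∀ V : Multiset ℕ,
        (∃ V₁ V₂ : Multiset ℕ, V = V₁ + V₂ ∧ MSupp φ Y V₁ ∧ MSupp ψ Y V₂) →
        MDer Y (U + V) p) →
      MDer X (P + U) p
  | .unit, B, P => ∀ X : MBase, B ⊆ X → ∀ U : Multiset ℕ, ∀ p : ℕ,
      MDer X U p → MDer X (P + U) p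
  | .limp φ ψ, B, P => ∀ X : MBase, B ⊆ X → ∀ U : Multiset ℕ,
      MSupp φ X U → MSupp ψ X (P + U)

/-- Support of a multiset of formulas: `⊩_B^P Γ`, obtained by splitting
the resources `P` among the members of `Γ`. -/
inductive MSuppCtx (B : MBase) : Multiset ℕ → Multiset MForm → Prop where
  | nil : MSuppCtx B 0 0
  | cons {P Q : Multiset ℕ} {φ : MForm} {Γ : Multiset MForm} :
      MSupp φ B P → MSuppCtx B Q Γ → MSuppCtx B (P + Q) (φ ::ₘ Γ)

/-- Support of a sequent: `Γ ⊩_B^P φ` (clause (Inf)). -/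
def MSuppInf (Γ : Multiset MForm) (B : MBase) (P : Multiset ℕ) (φ : MForm) : Prop :=
  ∀ X : MBase, B ⊆ X → ∀ U : Multiset ℕ, MSuppCtx X U Γ → MSupp φ X (P + U)

/-- Validity: `Γ ⊩ φ` iff `Γ ⊩_B^∅ φ` for every base `B`. -/
def MValid (Γ : Multiset MForm) (φ : MForm) : Prop :=
  ∀ B : MBase, MSuppInf Γ B 0 φ

/-- The natural deduction system NIMLL: `Γ ⊢ φ`. -/
inductive NIMLL : Multiset MForm → MForm → Prop where
  | ax (φ : MForm) : NIMLL {φ} φ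
  | limpI {Γ : Multiset MForm} {φ ψ : MForm} :
      NIMLL (φ ::ₘ Γ) ψ → NIMLL Γ (.limp φ ψ)
  | limpE {Γ Δ : Multiset MForm} {φ ψ : MForm} :
      NIMLL Γ (.limp φ ψ) → NIMLL Δ φ → NIMLL (Γ + Δ) ψ
  | unitI : NIMLL 0 .unit
  | unitE {Γ Δ : Multiset MForm} {φ : MForm} :
      NIMLL Γ φ → NIMLL Δ .unit → NIMLL (Γ + Δ) φ
  | tensorI {Γ Δ : Multiset MForm} {φ ψ : MForm} :
      NIMLL Γ φ → NIMLL Δ ψ → NIMLL (Γ + Δ) (.tensor φ ψ)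
  | tensorE {Γ Δ : Multiset MForm} {φ ψ χ : MForm} :
      NIMLL Γ (.tensor φ ψ) → NIMLL (φ ::ₘ ψ ::ₘ Δ) χ → NIMLL (Γ + Δ) χ


/-! ### Auxiliary development for completeness -/

namespace IMLLComplete

/-- Injective code of formulas into ℕ. -/
def code : MForm → ℕ
  | .atom n => Nat.pair 0 n
  | .tensor a b => Nat.pair 1 (Nat.pair (code a) (code b))
  | .unit => Nat.pair 2 0
  | .limp a b => Nat.pair 3 (Nat.pair (code a) (code b))

theorem code_inj : Function.Injective code := by
  intro a
  induction a with
  | atom n =>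
      intro b h; cases b <;> simp [code, Nat.pair_eq_pair] at h; simp [h]
  | tensor a₁ a₂ ih₁ ih₂ =>
      intro b h; cases b <;> simp [code, Nat.pair_eq_pair] at h
      obtain ⟨h1, h2⟩ := h; rw [ih₁ h1, ih₂ h2]
  | unit =>
      intro b h; cases b <;> first | rfl | simp [code, Nat.pair_eq_pair] at h
  | limp a₁ a₂ ih₁ ih₂ =>
      intro b h; cases b <;> simp [code, Nat.pair_eq_pair] at h
      obtain ⟨h1, h2⟩ := h; rw [ih₁ h1, ih₂ h2]

instance : Nonempty MForm := ⟨.unit⟩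

noncomputable def dec0 : ℕ → MForm := Function.invFun code

theorem dec0_code (ξ : MForm) : dec0 (code ξ) = ξ :=
  Function.leftInverse_invFun code_inj ξ

/-- The atom encoding a formula, above the bound `N`. -/
def enc (N : ℕ) (ξ : MForm) : ℕ := N + 1 + 2 * code ξ

/-- A second ("clone") atom encoding a formula. -/
def clone (N : ℕ) (ξ : MForm) : ℕ := N + 2 + 2 * code ξ

theorem enc_inj {N : ℕ} {ξ η : MForm} (h : enc N ξ = enc N η) : ξ = η := by
  apply code_inj; unfold enc at h; omega

theorem enc_ne_clone (N : ℕ) (ξ η : MForm) : enc N ξ ≠ clone N η := by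
  unfold enc clone; omega

theorem enc_gt (N : ℕ) (ξ : MForm) : N < enc N ξ := by unfold enc; omega

/-- Decoding of atoms into formulas. -/
noncomputable def dec (N : ℕ) (q : ℕ) : MForm :=
  if q ≤ N then .atom q else dec0 ((q - N - 1) / 2)

theorem dec_enc (N : ℕ) (ξ : MForm) : dec N (enc N ξ) = ξ := by
  have h1 : ¬ (enc N ξ ≤ N) := by unfold enc; omega
  have h2 : (enc N ξ - N - 1) / 2 = code ξ := by unfold enc; omega
  rw [dec, if_neg h1, h2, dec0_code]

theorem dec_clone (N : ℕ) (ξ : MForm) : dec N (clone N ξ) = ξ := by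
  have h1 : ¬ (clone N ξ ≤ N) := by unfold clone; omega
  have h2 : (clone N ξ - N - 1) / 2 = code ξ := by unfold clone; omega
  rw [dec, if_neg h1, h2, dec0_code]

theorem dec_le {N q : ℕ} (h : q ≤ N) : dec N q = .atom q := by rw [dec, if_pos h]

theorem limp_ne (φ ψ : MForm) : MForm.limp φ ψ ≠ φ := by
  intro h
  have := congrArg sizeOf h
  simp at this
  omega

/-- The universal base. -/
def NBase (N : ℕ) : MBase := fun r =>
  (∃ φ, r = ⟨{(0, enc N φ)}, clone N φ⟩) ∨
  (∃ φ, r = ⟨{(0, clone N φ)}, enc N φ⟩) ∨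
  (∃ φ ψ, r = ⟨{(0, enc N φ), (0, clone N ψ)}, enc N (.tensor φ ψ)⟩) ∨
  (∃ φ ψ p, r = ⟨{(0, enc N (.tensor φ ψ)), ({enc N φ, enc N ψ}, p)}, p⟩) ∨
  (r = ⟨∅, enc N .unit⟩) ∨
  (∃ p, r = ⟨{(0, p), (0, enc N .unit)}, p⟩) ∨
  (∃ p, r = ⟨{(0, p), (0, clone N .unit)}, p⟩) ∨
  (∃ φ ψ, r = ⟨{(0, enc N (.limp φ ψ)), (0, enc N φ)}, enc N ψ⟩) ∨
  (∃ φ ψ, r = ⟨{({enc N φ}, enc N ψ)}, enc N (.limp φ ψ)⟩) ∨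
  (∃ n, n ≤ N ∧ r = ⟨{(0, n)}, enc N (.atom n)⟩) ∨
  (∃ n, n ≤ N ∧ r = ⟨{(0, enc N (.atom n))}, n⟩)

theorem mder_eq {B : MBase} {P P' : Multiset ℕ} {p : ℕ}
    (h : MDer B P p) (e : P = P') : MDer B P' p := e ▸ h

theorem app0 {B : MBase} {q : ℕ} (hr : (⟨∅, q⟩ : MRule) ∈ B) : MDer B 0 q := by
  have := MDer.app hr (fun _ => 0) (by simp)
  simpa using this

theorem app1 {B : MBase} {A : Multiset ℕ × ℕ} {q : ℕ} {S₁ : Multiset ℕ}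
    (hr : (⟨{A}, q⟩ : MRule) ∈ B) (h : MDer B (S₁ + A.1) A.2) : MDer B S₁ q := by
  have := MDer.app hr (fun _ => S₁) (by simpa using h)
  simpa using this

theorem app2 {B : MBase} {A₁ A₂ : Multiset ℕ × ℕ} {q : ℕ} {S₁ S₂ : Multiset ℕ}
    (hne : A₁ ≠ A₂) (hr : (⟨{A₁, A₂}, q⟩ : MRule) ∈ B)
    (h₁ : MDer B (S₁ + A₁.1) A₁.2) (h₂ : MDer B (S₂ + A₂.1) A₂.2) :
    MDer B (S₁ + S₂) q := by
  have := MDer.app hr (fun pr => if pr = A₁ then S₁ else S₂) ?_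
  · rw [show ((⟨{A₁, A₂}, q⟩ : MRule)).prems = {A₁, A₂} from rfl] at this
    rw [Finset.sum_pair hne] at this
    simpa [hne.symm] using this
  · intro pr hpr
    rcases Finset.mem_insert.mp hpr with h | h
    · subst h; simpa using h₁
    · rw [Finset.mem_singleton] at h; subst h
      simpa [hne.symm] using h₂

theorem mder_mono {B X : MBase} (hBX : B ⊆ X) {P : Multiset ℕ} {p : ℕ}
    (h : MDer B P p) : MDer X P p := by
  induction h with
  | ref p => exact .ref p
  | app hr S h ih => exact .app (hBX hr) S ih

/-- Atoms of a formula are bounded by `N`. -/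
def Bounded (N : ℕ) : MForm → Prop
  | .atom n => n ≤ N
  | .tensor a b => Bounded N a ∧ Bounded N b
  | .unit => True
  | .limp a b => Bounded N a ∧ Bounded N b

theorem key (N : ℕ) (ξ : MForm) (hb : Bounded N ξ) :
    ∀ X : MBase, NBase N ⊆ X → ∀ P : Multiset ℕ,
      MSupp ξ X P ↔ MDer X P (enc N ξ) := by
  induction ξ with
  | atom n =>
      intro X hX P
      simp only [Bounded] at hb
      constructor
      · intro hs
        exact app1 (hX (Or.inr (Or.inr (Or.inr (Or.inr (Or.inr (Or.inr (Or.inr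
          (Or.inr (Or.inr (Or.inl ⟨n, hb, rfl⟩)))))))))))
          (mder_eq hs (show P = P + 0 by simp))
      · intro hd
        exact app1 (hX (Or.inr (Or.inr (Or.inr (Or.inr (Or.inr (Or.inr (Or.inr
          (Or.inr (Or.inr (Or.inr ⟨n, hb, rfl⟩)))))))))))
          (mder_eq hd (show P = P + 0 by simp))
  | tensor φ ψ ihφ ihψ =>
      simp only [Bounded] at hb
      obtain ⟨hbφ, hbψ⟩ := hb
      intro X hX P
      constructor
      · intro hs
        have inner : ∀ Y : MBase, X ⊆ Y → ∀ V : Multiset ℕ,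
            (∃ V₁ V₂ : Multiset ℕ, V = V₁ + V₂ ∧ MSupp φ Y V₁ ∧ MSupp ψ Y V₂) →
            MDer Y (0 + V) (enc N (.tensor φ ψ)) := by
          intro Y hXY V ⟨V₁, V₂, hV, h₁, h₂⟩
          subst hV
          have hNY : NBase N ⊆ Y := hX.trans hXY
          have d₁ : MDer Y V₁ (enc N φ) := (ihφ hbφ Y hNY V₁).mp h₁
          have d₂ : MDer Y V₂ (enc N ψ) := (ihψ hbψ Y hNY V₂).mp h₂
          have d₂' : MDer Y V₂ (clone N ψ) :=
            app1 (hNY (Or.inl ⟨ψ, rfl⟩)) (mder_eq d₂ (show V₂ = V₂ + 0 by simp))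
          have := app2 (A₁ := (0, enc N φ)) (A₂ := (0, clone N ψ))
            (by simp [enc_ne_clone])
            (hNY (Or.inr (Or.inr (Or.inl ⟨φ, ψ, rfl⟩))))
            (mder_eq d₁ (show V₁ = V₁ + 0 by simp)) (mder_eq d₂' (show V₂ = V₂ + 0 by simp))
          exact mder_eq this (by simp)
        have := hs X (le_refl X) 0 (enc N (.tensor φ ψ)) inner
        exact mder_eq this (by simp)
      · intro hd Y hXY U p hyp
        have hNY : NBase N ⊆ Y := hX.trans hXY
        have hsplit : ∃ V₁ V₂ : Multiset ℕ,
            ({enc N φ} + {enc N ψ} : Multiset ℕ) = V₁ + V₂ ∧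
            MSupp φ Y V₁ ∧ MSupp ψ Y V₂ :=
          ⟨{enc N φ}, {enc N ψ}, rfl,
            (ihφ hbφ Y hNY _).mpr (.ref _), (ihψ hbψ Y hNY _).mpr (.ref _)⟩
        have h2 := hyp Y (le_refl Y) _ hsplit
        have := app2 (A₁ := (0, enc N (.tensor φ ψ)))
            (A₂ := ({enc N φ, enc N ψ}, p))
            (by simp)
            (hNY (Or.inr (Or.inr (Or.inr (Or.inl ⟨φ, ψ, p, rfl⟩)))))
            (mder_eq (mder_mono hXY hd) (show P = P + 0 by simp))
            (mder_eq h2 (show U + ({enc N φ} + {enc N ψ}) = U + {enc N φ, enc N ψ} by rfl))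
        exact this
  | unit =>
      intro X hX P
      constructor
      · intro hs
        have h0 : MDer X 0 (enc N .unit) :=
          app0 (hX (Or.inr (Or.inr (Or.inr (Or.inr (Or.inl rfl))))))
        have := hs X (le_refl X) 0 (enc N .unit) h0
        exact mder_eq this (by simp)
      · intro hd Y hXY U p hu
        have hNY : NBase N ⊆ Y := hX.trans hXY
        by_cases hp : p = enc N .unit
        · subst hp
          have hc : MDer Y P (clone N .unit) :=
            app1 (hNY (Or.inl ⟨.unit, rfl⟩))
              (mder_eq (mder_mono hXY hd) (show P = P + 0 by simp))
          have := app2 (A₁ := (0, enc N .unit)) (A₂ := (0, clone N .unit))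
            (by simp [enc_ne_clone])
            (hNY (Or.inr (Or.inr (Or.inr (Or.inr (Or.inr (Or.inr (Or.inl
              ⟨enc N .unit, rfl⟩))))))))
            (mder_eq hu (show U = U + 0 by simp)) (mder_eq hc (show P = P + 0 by simp))
          exact mder_eq this (add_comm U P)
        · have := app2 (A₁ := (0, p)) (A₂ := (0, enc N .unit))
            (by simp [hp])
            (hNY (Or.inr (Or.inr (Or.inr (Or.inr (Or.inr (Or.inl ⟨p, rfl⟩)))))))
            (mder_eq hu (show U = U + 0 by simp)) (mder_eq (mder_mono hXY hd) (show P = P + 0 by simp))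
          exact mder_eq this (add_comm U P)
  | limp φ ψ ihφ ihψ =>
      simp only [Bounded] at hb
      obtain ⟨hbφ, hbψ⟩ := hb
      intro X hX P
      constructor
      · intro hs
        have h1 : MSupp φ X {enc N φ} := (ihφ hbφ X hX _).mpr (.ref _)
        have h2 : MSupp ψ X (P + {enc N φ}) := hs X (le_refl X) _ h1
        have h3 : MDer X (P + {enc N φ}) (enc N ψ) := (ihψ hbψ X hX _).mp h2
        exact app1 (A := ({enc N φ}, enc N ψ))
          (hX (Or.inr (Or.inr (Or.inr (Or.inr (Or.inr (Or.inr (Or.inr (Or.inr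
            (Or.inl ⟨φ, ψ, rfl⟩))))))))) ) h3
      · intro hd Y hXY U hU
        have hNY : NBase N ⊆ Y := hX.trans hXY
        have dU : MDer Y U (enc N φ) := (ihφ hbφ Y hNY U).mp hU
        have := app2 (A₁ := (0, enc N (.limp φ ψ))) (A₂ := (0, enc N φ))
          (by simp; intro h; exact limp_ne φ ψ (enc_inj h))
          (hNY (Or.inr (Or.inr (Or.inr (Or.inr (Or.inr (Or.inr (Or.inr
            (Or.inl ⟨φ, ψ, rfl⟩)))))))))
          (mder_eq (mder_mono hXY hd) (show P = P + 0 by simp)) (mder_eq dU (show U = U + 0 by simp))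
        exact (ihψ hbψ Y hNY _).mpr this


theorem nimll_eq {Γ Δ : Multiset MForm} {φ : MForm}
    (h : NIMLL Γ φ) (e : Γ = Δ) : NIMLL Δ φ := e ▸ h

theorem snd (N : ℕ) {P : Multiset ℕ} {p : ℕ} (h : MDer (NBase N) P p) :
    NIMLL (P.map (dec N)) (dec N p) := by
  induction h with
  | ref q => simpa using NIMLL.ax (dec N q)
  | app hr S h ih =>
    rcases hr with ⟨φ, rfl⟩ | ⟨φ, rfl⟩ | ⟨φ, ψ, rfl⟩ | ⟨φ, ψ, p, rfl⟩ | rfl |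
      ⟨p, rfl⟩ | ⟨p, rfl⟩ | ⟨φ, ψ, rfl⟩ | ⟨φ, ψ, rfl⟩ | ⟨n, hn, rfl⟩ | ⟨n, hn, rfl⟩
    -- clone intro
    · simp only [Finset.sum_singleton]
      have h1 := ih (0, enc N φ) (by simp)
      simp only [add_zero, dec_enc] at h1
      simpa [dec_clone] using h1
    -- clone elim
    · simp only [Finset.sum_singleton]
      have h1 := ih (0, clone N φ) (by simp)
      simp only [add_zero, dec_clone] at h1
      simpa [dec_enc] using h1
    -- tensor intro
    · have hne : ((0, enc N φ) : Multiset ℕ × ℕ) ≠ (0, clone N ψ) := by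
        simp [enc_ne_clone]
      simp only [show (⟨{(0, enc N φ), (0, clone N ψ)}, enc N (.tensor φ ψ)⟩ :
        MRule).prems = {(0, enc N φ), (0, clone N ψ)} from rfl]
      rw [Finset.sum_pair hne, Multiset.map_add]
      have h1 := ih (0, enc N φ) (by simp)
      have h2 := ih (0, clone N ψ) (by simp)
      simp only [add_zero, dec_enc, dec_clone] at h1 h2
      simpa [dec_enc] using NIMLL.tensorI h1 h2
    -- tensor elim
    · have hne : ((0, enc N (.tensor φ ψ)) : Multiset ℕ × ℕ) ≠
          (({enc N φ, enc N ψ}, p) : Multiset ℕ × ℕ) := by simp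
      rw [show (⟨{(0, enc N (.tensor φ ψ)), ({enc N φ, enc N ψ}, p)}, p⟩ :
        MRule).prems = {(0, enc N (.tensor φ ψ)), ({enc N φ, enc N ψ}, p)} from rfl,
        Finset.sum_pair hne, Multiset.map_add]
      have h1 := ih (0, enc N (.tensor φ ψ)) (by simp)
      have h2 := ih ({enc N φ, enc N ψ}, p) (by simp)
      simp only [add_zero, dec_enc] at h1 h2
      apply NIMLL.tensorE h1
      apply nimll_eq h2
      show Multiset.map (dec N) (_ + (enc N φ ::ₘ enc N ψ ::ₘ 0)) = _
      rw [Multiset.map_add, add_comm]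
      simp [dec_enc, Multiset.cons_add]
    -- unit intro
    · simpa [dec_enc] using NIMLL.unitI
    -- unit elim
    · by_cases hp : p = enc N .unit
      · subst hp
        rw [show (⟨{(0, enc N .unit), (0, enc N .unit)}, enc N .unit⟩ :
          MRule).prems = {(0, enc N .unit)} from by
            simp]
        simp only [Finset.sum_singleton]
        have h1 := ih (0, enc N .unit) (by simp)
        simpa using h1
      · have hne : ((0, p) : Multiset ℕ × ℕ) ≠ (0, enc N .unit) := by simp [hp]
        rw [show (⟨{(0, p), (0, enc N .unit)}, p⟩ : MRule).prems =
          {(0, p), (0, enc N .unit)} from rfl, Finset.sum_pair hne,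
          Multiset.map_add]
        have h1 := ih (0, p) (by simp)
        have h2 := ih (0, enc N .unit) (by simp)
        simp only [add_zero, dec_enc] at h1 h2
        exact NIMLL.unitE h1 h2
    -- unit elim (clone variant)
    · by_cases hp : p = clone N .unit
      · subst hp
        rw [show (⟨{(0, clone N .unit), (0, clone N .unit)}, clone N .unit⟩ :
          MRule).prems = {(0, clone N .unit)} from by simp]
        simp only [Finset.sum_singleton]
        have h1 := ih (0, clone N .unit) (by simp)
        simpa using h1
      · have hne : ((0, p) : Multiset ℕ × ℕ) ≠ (0, clone N .unit) := by simp [hp]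
        rw [show (⟨{(0, p), (0, clone N .unit)}, p⟩ : MRule).prems =
          {(0, p), (0, clone N .unit)} from rfl, Finset.sum_pair hne,
          Multiset.map_add]
        have h1 := ih (0, p) (by simp)
        have h2 := ih (0, clone N .unit) (by simp)
        simp only [add_zero, dec_clone] at h1 h2
        exact NIMLL.unitE h1 h2
    -- limp elim
    · have hne : ((0, enc N (.limp φ ψ)) : Multiset ℕ × ℕ) ≠ (0, enc N φ) := by
        simp; intro h; exact limp_ne φ ψ (enc_inj h)
      rw [show (⟨{(0, enc N (.limp φ ψ)), (0, enc N φ)}, enc N ψ⟩ :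
        MRule).prems = {(0, enc N (.limp φ ψ)), (0, enc N φ)} from rfl,
        Finset.sum_pair hne, Multiset.map_add]
      have h1 := ih (0, enc N (.limp φ ψ)) (by simp)
      have h2 := ih (0, enc N φ) (by simp)
      simp only [add_zero, dec_enc] at h1 h2
      simpa [dec_enc] using NIMLL.limpE h1 h2
    -- limp intro
    · simp only [Finset.sum_singleton]
      have h1 := ih ({enc N φ}, enc N ψ) (by simp)
      simp only [dec_enc] at h1
      rw [dec_enc]
      apply NIMLL.limpI
      apply nimll_eq h1
      rw [Multiset.map_add, add_comm]
      simp [dec_enc, Multiset.singleton_add]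
    -- atom code intro
    · simp only [Finset.sum_singleton]
      have h1 := ih (0, n) (by simp)
      simp only [add_zero, dec_le hn] at h1
      simpa [dec_enc] using h1
    -- atom code elim
    · simp only [Finset.sum_singleton]
      have h1 := ih (0, enc N (.atom n)) (by simp)
      simp only [add_zero, dec_enc] at h1
      simpa [dec_le hn] using h1

/-- Max atom occurring in a formula. -/
def maxAtom : MForm → ℕ
  | .atom n => n
  | .tensor a b => max (maxAtom a) (maxAtom b)
  | .unit => 0
  | .limp a b => max (maxAtom a) (maxAtom b)

theorem bounded_of_le {N : ℕ} : ∀ {ξ : MForm}, maxAtom ξ ≤ N → Bounded N ξ := by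
  intro ξ
  induction ξ with
  | atom n => intro h; exact h
  | tensor a b iha ihb =>
      intro h; simp only [maxAtom, max_le_iff] at h
      exact ⟨iha h.1, ihb h.2⟩
  | unit => intro _; trivial
  | limp a b iha ihb =>
      intro h; simp only [maxAtom, max_le_iff] at h
      exact ⟨iha h.1, ihb h.2⟩

theorem supp_ctx (N : ℕ) : ∀ Γ : Multiset MForm, (∀ γ ∈ Γ, Bounded N γ) →
    MSuppCtx (NBase N) (Γ.map (enc N)) Γ := by
  intro Γ
  induction Γ using Multiset.induction_on with
  | empty => intro _; simpa using MSuppCtx.nil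
  | cons γ Γ ihΓ =>
      intro hb
      have h1 : MSupp γ (NBase N) {enc N γ} :=
        (key N γ (hb γ (by simp)) _ (le_refl _) _).mpr (.ref _)
      have h2 := MSuppCtx.cons h1 (ihΓ fun x hx => hb x (by simp [hx]))
      have e : ({enc N γ} : Multiset ℕ) + Γ.map (enc N) = ((γ ::ₘ Γ).map (enc N)) := by
        simp [Multiset.singleton_add]
      exact e ▸ h2

end IMLLComplete

open IMLLComplete

/-- (Completeness of the base-extension semantics for IMLL)
If `Γ ⊩ φ`, then `Γ ⊢ φ` in NIMLL. -/
theorem imll_completeness (Γ : Multiset MForm) (φ : MForm) (h : MValid Γ φ) :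
    NIMLL Γ φ := by
  classical
  set N : ℕ := (Multiset.map maxAtom (φ ::ₘ Γ)).sum with hNdef
  have hble : ∀ ξ ∈ φ ::ₘ Γ, Bounded N ξ := by
    intro ξ hξ
    apply bounded_of_le
    exact Multiset.single_le_sum (by simp) _ (Multiset.mem_map_of_mem _ hξ)
  have hctx : MSuppCtx (NBase N) (Γ.map (enc N)) Γ :=
    supp_ctx N Γ (fun γ hγ => hble γ (by simp [hγ]))
  have hs : MSupp φ (NBase N) (0 + Γ.map (enc N)) :=
    h (NBase N) (NBase N) (le_refl _) _ hctx
  rw [zero_add] at hs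
  have hd : MDer (NBase N) (Γ.map (enc N)) (enc N φ) :=
    (key N φ (hble φ (by simp)) _ (le_refl _) _).mp hs
  have hn := snd N hd
  rw [Multiset.map_map, dec_enc] at hn
  have : Multiset.map (dec N ∘ enc N) Γ = Γ := by
    rw [show Multiset.map (dec N ∘ enc N) Γ = Multiset.map id Γ from
      Multiset.map_congr rfl (fun x _ => by simp [dec_enc]), Multiset.map_id]
  rwa [this] at hn
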